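/- arXiv:2208.13095 — 2 statements merged into one kernel-verified Lean document; each statement's English description precedes it below -/
import Mathlib

section
/- Let Γ be a finite link-regular simple graph with maximal clique size d. Using the geodesic automaton of RACG(Γ), for a clique σ let L_σ denote the set of words over VΓ accepted when the automaton is started in state σ. For 1 ≤ m ≤ d and n ≥ 0, let g_m(n) = Σ_{(v₁,…,v_m) ordered m-clique} |L_{{v₁,…,v_m}} ∩ (VΓ)ⁿ|, let g₀(n) = |L_∅ ∩ (VΓ)ⁿ|, and set g_{d+1}(n) = 0 for all n. Then: g₀(0) = 1 and g₀(n+1) = g₁(n) for all n ≥ 0; and for every 1 ≤ m ≤ d, g_m(0) = ℓ₀ℓ₁⋯ℓ_{m−1} and g_m(n+1) = Σ_{k=0}^{m} binom(m,k) N_{m,k} g_{k+1}(n) for all n ≥ 0. -/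
variable {V : Type*}

/-- The link of a finite set of vertices `σ`: vertices `v ∉ σ` with `σ ∪ {v}` a clique. -/
noncomputable def lk [Fintype V] (G : SimpleGraph V) (σ : Finset V) : Finset V :=
  Set.Finite.toFinset (Set.toFinite {v : V | v ∉ σ ∧ G.IsClique (insert v (σ : Set V))})

/-- Link-regularity of a simple graph: cliques of the same size have links of the same size. -/
def LinkRegularS [Fintype V] (G : SimpleGraph V) : Prop :=
  ∀ σ₁ σ₂ : Finset V, G.IsClique (σ₁ : Set V) → G.IsClique (σ₂ : Set V) →
    σ₁.card = σ₂.card → (lk G σ₁).card = (lk G σ₂).card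

/-- The numbers `N_{m,k}` of the paper, in terms of the link sizes `ℓ`. -/
def Nmk (ℓ : ℕ → ℤ) (m k : ℕ) : ℤ :=
  if k = m then 1
  else if k + 1 = m then ℓ (m - 1) - ℓ m - 1
  else (∏ j ∈ Finset.Ioo k m, ℓ j) *
    ∑ j ∈ Finset.Icc k m, ((m - k).choose (j - k) : ℤ) * (-1) ^ (j - k) * ℓ j

/-- The transition function of the geodesic automaton of a RACG: states are finite sets of
vertices (the reachable ones are the cliques), `none` is the reject state. -/
def racgStep (G : SimpleGraph V) [DecidableEq V] [DecidableRel G.Adj] [Fintype V]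
    (σ : Finset V) (v : V) : Option (Finset V) :=
  if v ∈ σ then none else some (insert v (G.neighborFinset v ∩ σ))

def racgRun (G : SimpleGraph V) [DecidableEq V] [DecidableRel G.Adj] [Fintype V] :
    Finset V → List V → Option (Finset V)
  | σ, [] => some σ
  | σ, v :: w =>
    match racgStep G σ v with
    | none => none
    | some τ => racgRun G τ w

/-- `|L_σ ∩ (VΓ)ⁿ|`: the number of words of length `n` accepted by the geodesic automaton
of `RACG(Γ)` started in state `σ`. -/
noncomputable def aCount (G : SimpleGraph V) [Fintype V] [DecidableEq V] [DecidableRel G.Adj]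
    (σ : Finset V) (n : ℕ) : ℕ :=
  Set.ncard {w : List V | w.length = n ∧ ∃ τ, racgRun G σ w = some τ ∧ G.IsClique (τ : Set V)}

/-- The ordered `m`-cliques of `G`, as injective tuples with clique range. -/
noncomputable def orderedCliques [Fintype V] (G : SimpleGraph V) (m : ℕ) :
    Finset (Fin m → V) :=
  Set.Finite.toFinset (Set.toFinite
    {t : Fin m → V | Function.Injective t ∧ G.IsClique (Set.range t)})

/-- `g_m(n)`: for `m = 0` the number of accepted words of length `n` from the empty clique;
for `m ≥ 1` the sum over ordered `m`-cliques of the number of accepted words of length `n`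
starting at the corresponding state.  (For `m` larger than the maximal clique size there are
no ordered `m`-cliques, so the value is `0`.) -/
noncomputable def gfun (G : SimpleGraph V) [Fintype V] [DecidableEq V] [DecidableRel G.Adj]
    (m n : ℕ) : ℤ :=
  if m = 0 then (aCount G ∅ n : ℤ)
  else ∑ t ∈ orderedCliques G m, (aCount G (Finset.image t Finset.univ) n : ℤ)

/-!
Write `a_σ(n)` for the number of accepted words of length `n` from the state `σ`, `N[v]` for the
closed neighbourhood of `v`, and `δ(σ, v) = {v} ∪ (Lk v ∩ σ)` for the transition. Every `m`-clique
comes from `m!` ordered ones, so `g_m(n) = m! ∑_σ a_σ(n)` over the `m`-cliques `σ`, and reading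
the first letter gives `a_σ(n + 1) = ∑_{v ∉ σ} a_{δ(σ, v)}(n)`. Group the pairs `(σ, v)` by the
clique `τ = δ(σ, v)`: for a `(k + 1)`-clique `τ` and `v ∈ τ`, they are the `m`-cliques `σ` with
`σ ∩ N[v] = τ \ {v}`. Inclusion–exclusion over the cliques `ρ` with `τ \ {v} ⊆ ρ ⊆ σ ∩ N[v]`
turns their number into an alternating sum of numbers of `m`-cliques containing `ρ`, and
link-regularity evaluates those by double counting: `p!` times the number of `(|ρ| + p)`-cliques
containing `ρ` is `ℓ_{|ρ|} ⋯ ℓ_{|ρ|+p-1}`. The outcome is that `(m - k)!` times the number of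
such `σ` is `N_{m,k}`.
-/

open Finset SimpleGraph
open scoped Nat

lemma Finset.sum_Icc_neg_one_pow_card_sdiff {α : Type*} [DecidableEq α] (π X : Finset α) :
    ∑ ρ ∈ Icc π X, (-1 : ℤ) ^ #(ρ \ π) = if X = π then 1 else 0 := by
  by_cases h : π ⊆ X
  · have hdisj {S : Finset α} (hS : S ∈ (X \ π).powerset) : Disjoint π S :=
      disjoint_of_subset_right (mem_powerset.1 hS) disjoint_sdiff
    rw [Icc_eq_image_powerset h, sum_image fun S hS T hT hST => by
      rw [← union_sdiff_cancel_left (hdisj hS), ← union_sdiff_cancel_left (hdisj hT), hST]]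
    rw [sum_congr rfl fun S hS => by rw [union_sdiff_cancel_left (hdisj hS)],
      sum_powerset_neg_one_pow_card]
    have hX : X \ π = ∅ ↔ X = π :=
      sdiff_eq_empty_iff_subset.trans ⟨fun h' => h'.antisymm h, fun h' => h'.le⟩
    simp only [hX]
  · rw [Icc_eq_empty_iff.2 h, sum_empty, if_neg fun hX : X = π => h hX.ge]

lemma sum_range_neg_one_pow_mul_choose_mul (p : ℕ) :
    ∑ i ∈ range (p + 1), (-1 : ℤ) ^ i * p.choose i * i = if p = 1 then -1 else 0 := by
  rcases p with _ | q
  · simp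
  rw [sum_range_succ']
  have (i : ℕ) : (-1 : ℤ) ^ (i + 1) * (q + 1).choose (i + 1) * ((i + 1 : ℕ) : ℤ) =
      -(q + 1) * ((-1) ^ i * q.choose i) := by
    have h : ((q : ℤ) + 1) * q.choose i = (q + 1).choose (i + 1) * (i + 1) := by
      exact_mod_cast Nat.add_one_mul_choose_eq q i
    push_cast
    linear_combination (-1 : ℤ) ^ i * h
  simp only [this, ← mul_sum, Int.alternating_sum_range_choose]
  split_ifs <;> simp_all

lemma sum_neg_one_pow_mul_choose_eq_Nmk (ℓ : ℕ → ℤ) (k p : ℕ) :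
    ∑ i ∈ range (p + 1), (-1) ^ i * p.choose i *
        ((i * ∏ j ∈ Ico (k + 1) (k + i), ℓ j + ∏ j ∈ Ico (k + 1) (k + i + 1), ℓ j) *
          ∏ j ∈ Ico (k + i) (k + p), ℓ j) =
      Nmk ℓ (k + p) k := by
  rcases Nat.eq_zero_or_pos p with rfl | hp
  · simp [Nmk]
  have hterm (i : ℕ) (hi : i ∈ range (p + 1)) :
      (i * ∏ j ∈ Ico (k + 1) (k + i), ℓ j + ∏ j ∈ Ico (k + 1) (k + i + 1), ℓ j) *
          ∏ j ∈ Ico (k + i) (k + p), ℓ j = (i + ℓ (k + i)) * ∏ j ∈ Ico (k + 1) (k + p), ℓ j := by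
    have hi : i ≤ p := Nat.lt_succ_iff.1 (mem_range.1 hi)
    rcases Nat.eq_zero_or_pos i with rfl | hi0
    · simp [prod_eq_prod_Ico_succ_bot (show k < k + p by omega)]
    rw [prod_Ico_succ_top (by omega), ← prod_Ico_consecutive ℓ (show k + 1 ≤ k + i by omega)
      (show k + i ≤ k + p by omega)]
    ring
  rw [sum_congr rfl fun i hi => congrArg ((-1) ^ i * (p.choose i : ℤ) * ·) (hterm i hi)]
  have hsplit (i : ℕ) : (-1) ^ i * p.choose i * ((i + ℓ (k + i)) * ∏ j ∈ Ico (k + 1) (k + p), ℓ j) =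
      ((-1) ^ i * p.choose i * i + (-1) ^ i * p.choose i * ℓ (k + i)) *
        ∏ j ∈ Ico (k + 1) (k + p), ℓ j := by
    ring
  simp only [hsplit, ← sum_mul, sum_add_distrib, sum_range_neg_one_pow_mul_choose_mul]
  by_cases hp1 : p = 1
  · subst hp1
    simp [Nmk, sum_range_succ, sub_eq_add_neg, add_comm]
  rw [Nmk, if_neg (show k ≠ k + p by omega), if_neg (show k + 1 ≠ k + p by omega), if_neg hp1,
    zero_add, mul_comm, ← Ico_add_one_left_eq_Ioo, ← Ico_add_one_right_eq_Icc, sum_Ico_eq_sum_range,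
    show k + p + 1 - k = p + 1 by omega]
  simp only [add_tsub_cancel_left, mul_comm ((-1 : ℤ) ^ _)]

section Words

variable [Fintype V] [DecidableEq V] (G : SimpleGraph V) [DecidableRel G.Adj]

def acceptedWords : Finset V → ℕ → Finset (List V)
  | σ, 0 => if G.IsClique (σ : Set V) then {[]} else ∅
  | σ, n + 1 => σᶜ.biUnion fun v =>
      (acceptedWords (insert v (G.neighborFinset v ∩ σ)) n).image (List.cons v)

lemma mem_acceptedWords {σ : Finset V} {n : ℕ} {w : List V} :
    w ∈ acceptedWords G σ n ↔
      w.length = n ∧ ∃ τ, racgRun G σ w = some τ ∧ G.IsClique (τ : Set V) := by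
  induction w generalizing σ n with
  | nil =>
    cases n with
    | zero => simp only [acceptedWords]; split_ifs <;> simp_all [racgRun]
    | succ n => simp [acceptedWords]
  | cons v w ih =>
    cases n with
    | zero => simp only [acceptedWords]; split_ifs <;> simp
    | succ n =>
      by_cases hv : v ∈ σ
      · simp [acceptedWords, racgRun, racgStep, hv]
      · simp [acceptedWords, racgRun, racgStep, hv, ih]

lemma aCount_eq_card_acceptedWords (σ : Finset V) (n : ℕ) :
    aCount G σ n = #(acceptedWords G σ n) := by
  rw [aCount, ← Set.ncard_coe_finset]
  congr 1
  ext w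
  exact (mem_acceptedWords G).symm

lemma aCount_zero {σ : Finset V} (hσ : G.IsClique (σ : Set V)) : aCount G σ 0 = 1 := by
  rw [aCount_eq_card_acceptedWords, acceptedWords, if_pos hσ, card_singleton]

lemma aCount_succ (σ : Finset V) (n : ℕ) :
    aCount G σ (n + 1) = ∑ v ∈ σᶜ, aCount G (insert v (G.neighborFinset v ∩ σ)) n := by
  rw [aCount_eq_card_acceptedWords, acceptedWords, card_biUnion]
  · simp_rw [card_image_of_injective _ List.cons_injective, aCount_eq_card_acceptedWords]
  · intro v _ v' _ hvv'
    simp only [Function.onFun, Finset.disjoint_left, mem_image]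
    rintro _ ⟨w, _, rfl⟩ ⟨w', _, h⟩
    exact hvv' (List.cons_eq_cons.1 h).1.symm

end Words

section Tuples

variable [DecidableEq V]

lemma injective_of_card_image_univ {ι : Type*} [Fintype ι] {t : ι → V}
    (h : #(image t univ) = Fintype.card ι) : Function.Injective t := by
  rwa [← Set.injOn_univ, ← coe_univ, ← card_image_iff]

variable [Fintype V]

lemma card_filter_image_univ_eq_factorial {m : ℕ} {σ : Finset V} (hσ : #σ = m) :
    #{t : Fin m → V | image t univ = σ} = m ! := by
  have hcard : Fintype.card (Fin m ≃ σ) = m ! := by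
    rw [Fintype.card_equiv ((finCongr hσ.symm).trans σ.equivFin.symm), Fintype.card_fin]
  rw [← hcard, ← card_univ]
  symm
  refine card_bij (fun e _ j => (e j : V)) (fun e _ => ?_) (fun e _ e' _ h => ?_) fun t ht => ?_
  · refine mem_filter.2 ⟨mem_univ _, ?_⟩
    ext x
    simp only [mem_image, mem_univ, true_and]
    exact ⟨fun ⟨j, hj⟩ => hj ▸ (e j).2, fun hx => ⟨e.symm ⟨x, hx⟩, by simp⟩⟩
  · exact Equiv.ext fun j => Subtype.ext (congrFun h j)
  · have ht : image t univ = σ := (mem_filter.1 ht).2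
    have hmem (j : Fin m) : t j ∈ σ := ht ▸ mem_image_of_mem t (mem_univ j)
    have hinj : Function.Injective t :=
      injective_of_card_image_univ (by rw [ht, hσ, Fintype.card_fin])
    have hbij : Function.Bijective fun j => (⟨t j, hmem j⟩ : σ) := by
      rw [Fintype.bijective_iff_injective_and_card]
      exact ⟨fun i j h => hinj (congrArg Subtype.val h), by simp [hσ]⟩
    exact ⟨Equiv.ofBijective _ hbij, mem_univ _, rfl⟩

variable (G : SimpleGraph V) [DecidableRel G.Adj]

lemma gfun_eq_factorial_mul_sum (m n : ℕ) :
    gfun G m n = m ! * ∑ σ ∈ G.cliqueFinset m, (aCount G σ n : ℤ) := by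
  rcases Nat.eq_zero_or_pos m with rfl | hm
  · have : G.cliqueFinset 0 = {∅} := by ext; simp
    simp [gfun, this]
  rw [gfun, if_neg hm.ne', ← sum_fiberwise_of_maps_to (g := fun t => image t univ)
    (t := G.cliqueFinset m), mul_sum]
  · refine sum_congr rfl fun σ hσ => ?_
    have hσ' := mem_cliqueFinset_iff.1 hσ
    rw [sum_congr rfl fun t ht => by rw [(mem_filter.1 ht).2], sum_const, nsmul_eq_mul]
    congr 1
    rw [← card_filter_image_univ_eq_factorial hσ'.2]
    congr 2
    ext t
    simp only [orderedCliques, Set.Finite.mem_toFinset, Set.mem_ofPred_eq, mem_filter, mem_univ,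
      true_and]
    refine ⟨And.right, fun ht => ⟨⟨injective_of_card_image_univ ?_, ?_⟩, ht⟩⟩
    · rw [ht, hσ'.2, Fintype.card_fin]
    · simpa [← ht] using hσ'.1
  · intro t ht
    simp only [orderedCliques, Set.Finite.mem_toFinset, Set.mem_ofPred_eq] at ht
    rw [mem_cliqueFinset_iff, isNClique_iff, coe_image, coe_univ,
      Set.image_univ, card_image_of_injective _ ht.1, card_univ, Fintype.card_fin]
    exact ⟨ht.2, rfl⟩

end Tuples

section Cliques

variable [Fintype V] {G : SimpleGraph V}

lemma mem_lk {σ : Finset V} {v : V} :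
    v ∈ lk G σ ↔ v ∉ σ ∧ G.IsClique (insert v (σ : Set V)) := by
  simp [lk]

lemma lk_empty : lk G ∅ = univ := by
  ext
  simp [mem_lk]

variable (G) in
def HasLinkSizes (ℓ : ℕ → ℤ) : Prop :=
  ∀ σ : Finset V, G.IsClique (σ : Set V) → (#(lk G σ) : ℤ) = ℓ #σ

variable [DecidableEq V] [DecidableRel G.Adj]

variable (G) in
def SimpleGraph.cliquesAbove (π : Finset V) (n : ℕ) : Finset (Finset V) :=
  {σ ∈ G.cliqueFinset n | π ⊆ σ}

@[simp]
lemma SimpleGraph.mem_cliquesAbove {π σ : Finset V} {n : ℕ} :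
    σ ∈ G.cliquesAbove π n ↔ G.IsClique (σ : Set V) ∧ #σ = n ∧ π ⊆ σ := by
  simp [SimpleGraph.cliquesAbove, isNClique_iff, and_assoc]

lemma SimpleGraph.cliquesAbove_card_self {π : Finset V} (hπ : G.IsClique (π : Set V)) :
    G.cliquesAbove π #π = {π} := by
  ext σ
  simp only [mem_cliquesAbove, mem_singleton]
  constructor
  · rintro ⟨-, hcard, hsub⟩
    exact (eq_of_subset_of_card_le hsub hcard.le).symm
  · rintro rfl
    exact ⟨hπ, rfl, subset_rfl⟩

lemma SimpleGraph.cliquesAbove_eq_empty {π : Finset V} {n : ℕ} (h : n < #π) :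
    G.cliquesAbove π n = ∅ :=
  eq_empty_of_forall_notMem fun σ hσ => by
    obtain ⟨-, hcard, hsub⟩ := mem_cliquesAbove.1 hσ
    exact (card_le_card hsub).not_gt (hcard ▸ h)

lemma SimpleGraph.filter_cliquesAbove_succ_superset {π σ : Finset V} {n : ℕ}
    (hσ : σ ∈ G.cliquesAbove π n) :
    {τ ∈ G.cliquesAbove π (n + 1) | σ ⊆ τ} = (lk G σ).image (insert · σ) := by
  obtain ⟨hcl, hcard, hπσ⟩ := mem_cliquesAbove.1 hσ
  ext τ
  simp only [mem_filter, mem_cliquesAbove, mem_image, mem_lk]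
  constructor
  · rintro ⟨⟨hτ, hτcard, -⟩, hστ⟩
    obtain ⟨v, hv, rfl⟩ := exists_eq_insert_iff.2 ⟨hστ, by omega⟩
    exact ⟨v, ⟨hv, by simpa using hτ⟩, rfl⟩
  · rintro ⟨v, ⟨hv, hvcl⟩, rfl⟩
    refine ⟨⟨by simpa using hvcl, by rw [card_insert_of_notMem hv, hcard], ?_⟩,
      subset_insert _ _⟩
    exact hπσ.trans (subset_insert _ _)

lemma SimpleGraph.filter_cliquesAbove_subset {π τ : Finset V} {n : ℕ}
    (hτ : τ ∈ G.cliquesAbove π (n + 1)) :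
    {σ ∈ G.cliquesAbove π n | σ ⊆ τ} = (τ \ π).image τ.erase := by
  obtain ⟨hcl, hcard, hπτ⟩ := mem_cliquesAbove.1 hτ
  ext σ
  simp only [mem_filter, mem_cliquesAbove, mem_image, mem_sdiff]
  constructor
  · rintro ⟨⟨-, hσcard, hπσ⟩, hστ⟩
    obtain ⟨v, hv, rfl⟩ := exists_eq_insert_iff.2 ⟨hστ, by omega⟩
    exact ⟨v, ⟨mem_insert_self v σ, fun h => hv (hπσ h)⟩, erase_insert hv⟩
  · rintro ⟨v, ⟨hvτ, hvπ⟩, rfl⟩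
    refine ⟨⟨hcl.subset (by simp), by rw [card_erase_of_mem hvτ, hcard]; rfl, ?_⟩,
      erase_subset v τ⟩
    exact fun x hx => mem_erase.2 ⟨fun h => hvπ (h ▸ hx), hπτ hx⟩

lemma SimpleGraph.sub_card_mul_card_cliquesAbove_succ (π : Finset V) (n : ℕ) :
    (n + 1 - #π) * #(G.cliquesAbove π (n + 1)) = ∑ σ ∈ G.cliquesAbove π n, #(lk G σ) := by
  have key : ∑ σ ∈ G.cliquesAbove π n, #{τ ∈ G.cliquesAbove π (n + 1) | σ ⊆ τ} =
      ∑ τ ∈ G.cliquesAbove π (n + 1), #{σ ∈ G.cliquesAbove π n | σ ⊆ τ} :=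
    sum_card_bipartiteAbove_eq_sum_card_bipartiteBelow _
  have above (σ) (hσ : σ ∈ G.cliquesAbove π n) :
      #{τ ∈ G.cliquesAbove π (n + 1) | σ ⊆ τ} = #(lk G σ) := by
    rw [filter_cliquesAbove_succ_superset hσ, card_image_of_injOn]
    intro v hv w _ h
    exact (insert_inj (mem_lk.1 hv).1).1 h
  have below (τ) (hτ : τ ∈ G.cliquesAbove π (n + 1)) :
      #{σ ∈ G.cliquesAbove π n | σ ⊆ τ} = n + 1 - #π := by
    obtain ⟨-, hcard, hπτ⟩ := mem_cliquesAbove.1 hτ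
    rw [filter_cliquesAbove_subset hτ, card_image_of_injOn
      ((erase_injOn τ).mono (sdiff_subset)), card_sdiff_of_subset hπτ, hcard]
  rw [sum_congr rfl above, sum_congr rfl below, sum_const, smul_eq_mul] at key
  rw [key, mul_comm]

variable (G) in
def SimpleGraph.closedNeighborFinset (v : V) : Finset V :=
  insert v (G.neighborFinset v)

lemma SimpleGraph.IsClique.subset_closedNeighborFinset {ρ : Finset V} {u : V}
    (hρ : G.IsClique (ρ : Set V)) (hu : u ∈ ρ) : ρ ⊆ G.closedNeighborFinset u := fun x hx => by
  rw [closedNeighborFinset, mem_insert, mem_neighborFinset]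
  by_cases hxu : x = u
  · exact Or.inl hxu
  · exact Or.inr (hρ hu hx (Ne.symm hxu))

lemma card_filter_cliquesAbove_subset_closedNeighborFinset {π : Finset V} {u : V} (hu : u ∉ π)
    (n : ℕ) :
    #{ρ ∈ G.cliquesAbove π n | ρ ⊆ G.closedNeighborFinset u} =
      #(G.cliquesAbove (insert u π) n) + #(G.cliquesAbove (insert u π) (n + 1)) := by
  rw [← card_filter_add_card_filter_not (u ∈ ·), filter_filter, filter_filter]
  congr 1
  · congr 1
    ext ρ
    simp only [mem_filter, mem_cliquesAbove, insert_subset_iff]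
    constructor
    · rintro ⟨⟨hρ, hcard, hπρ⟩, -, huρ⟩
      exact ⟨hρ, hcard, huρ, hπρ⟩
    · rintro ⟨hρ, hcard, huρ, hπρ⟩
      exact ⟨⟨hρ, hcard, hπρ⟩, hρ.subset_closedNeighborFinset huρ, huρ⟩
  · refine card_nbij' (insert u) (·.erase u) (fun ρ hρ => ?_) (fun τ hτ => ?_)
      (fun ρ hρ => ?_) (fun τ hτ => ?_)
    · simp only [coe_filter, Set.mem_ofPred_eq, mem_cliquesAbove] at hρ
      obtain ⟨⟨hρ, hcard, hπρ⟩, hρu, huρ⟩ := hρ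
      have hadj : ∀ x ∈ ρ, G.Adj u x := fun x hx => by
        have := hρu hx
        rw [closedNeighborFinset, mem_insert, mem_neighborFinset] at this
        exact this.resolve_left fun h => huρ (h ▸ hx)
      refine mem_cliquesAbove.2 ⟨?_, by rw [card_insert_of_notMem huρ, hcard],
        insert_subset_insert u hπρ⟩
      rw [coe_insert]
      exact hρ.insert fun x hx _ => hadj x hx
    · obtain ⟨hτ, hcard, huπτ⟩ := mem_cliquesAbove.1 hτ
      have huτ : u ∈ τ := huπτ (mem_insert_self u π)
      simp only [coe_filter, Set.mem_ofPred_eq, mem_cliquesAbove]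
      refine ⟨⟨hτ.subset (by simp), by rw [card_erase_of_mem huτ, hcard]; rfl, ?_⟩,
        (erase_subset u τ).trans (hτ.subset_closedNeighborFinset huτ), notMem_erase u τ⟩
      exact fun x hx => mem_erase.2 ⟨fun h => hu (h ▸ hx), huπτ (mem_insert_of_mem hx)⟩
    · simp only [coe_filter, Set.mem_ofPred_eq] at hρ
      exact erase_insert hρ.2.2
    · exact insert_erase ((mem_cliquesAbove.1 hτ).2.2 (mem_insert_self u π))

lemma card_filter_inter_closedNeighborFinset_eq_sum (π : Finset V) (u : V) (n : ℕ) :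
    (#{σ ∈ G.cliqueFinset n | σ ∩ G.closedNeighborFinset u = π} : ℤ) =
      ∑ ρ ∈ {ρ ∈ Icc π (G.closedNeighborFinset u) | #ρ ≤ n ∧ G.IsClique (ρ : Set V)},
        (-1 : ℤ) ^ #(ρ \ π) * #(G.cliquesAbove ρ n) := by
  rw [card_filter, Nat.cast_sum]
  simp_rw [Nat.cast_ite, Nat.cast_one, Nat.cast_zero, ← sum_Icc_neg_one_pow_card_sdiff]
  rw [sum_comm' (t' := {ρ ∈ Icc π (G.closedNeighborFinset u) | #ρ ≤ n ∧ G.IsClique (ρ : Set V)})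
    (s' := fun ρ => G.cliquesAbove ρ n)]
  · simp_rw [sum_const, nsmul_eq_mul, mul_comm]
  intro σ ρ
  simp only [mem_cliqueFinset_iff, isNClique_iff, mem_Icc, mem_filter, mem_cliquesAbove,
    subset_inter_iff]
  constructor
  · rintro ⟨⟨hσ, rfl⟩, hπρ, hρσ, hρu⟩
    exact ⟨⟨hσ, rfl, hρσ⟩, ⟨hπρ, hρu⟩, card_le_card hρσ, hσ.subset (by simpa)⟩
  · rintro ⟨⟨hσ, rfl, hρσ⟩, ⟨hπρ, hρu⟩, -⟩
    exact ⟨⟨hσ, rfl⟩, hπρ, hρσ, hρu⟩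

lemma filter_card_sdiff_eq_filter_cliquesAbove {π : Finset V} {u : V} {i p : ℕ} (hip : i ≤ p) :
    {ρ ∈ {ρ ∈ Icc π (G.closedNeighborFinset u) | #ρ ≤ #π + p ∧ G.IsClique (ρ : Set V)} |
        #(ρ \ π) = i} =
      {ρ ∈ G.cliquesAbove π (#π + i) | ρ ⊆ G.closedNeighborFinset u} := by
  ext ρ
  simp only [mem_filter, mem_Icc, mem_cliquesAbove]
  constructor
  · rintro ⟨⟨⟨hπρ, hρu⟩, -, hρ⟩, rfl⟩
    refine ⟨⟨hρ, ?_, hπρ⟩, hρu⟩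
    rw [card_sdiff_of_subset hπρ]
    have := card_le_card hπρ
    omega
  · rintro ⟨⟨hρ, hcard, hπρ⟩, hρu⟩
    refine ⟨⟨⟨hπρ, hρu⟩, by omega, hρ⟩, ?_⟩
    rw [card_sdiff_of_subset hπρ]
    omega

lemma insert_neighborFinset_inter_eq_iff {σ τ : Finset V} {v : V} :
    (v ∉ σ ∧ insert v (G.neighborFinset v ∩ σ) = τ) ↔
      (v ∈ τ ∧ σ ∩ G.closedNeighborFinset v = τ.erase v) := by
  have hv : v ∉ G.neighborFinset v ∩ σ := by simp
  constructor
  · rintro ⟨hvσ, rfl⟩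
    rw [closedNeighborFinset, inter_insert_of_notMem hvσ, erase_insert hv, inter_comm]
    exact ⟨mem_insert_self _ _, rfl⟩
  · rintro ⟨hvτ, h⟩
    have hvσ : v ∉ σ := fun hvσ => notMem_erase v τ (h ▸ mem_inter.2 ⟨hvσ, mem_insert_self _ _⟩)
    rw [closedNeighborFinset, inter_insert_of_notMem hvσ, inter_comm] at h
    exact ⟨hvσ, by rw [h, insert_erase hvτ]⟩

lemma insert_neighborFinset_inter_mem_cliqueFinset {σ : Finset V} {m : ℕ}
    (hσ : σ ∈ G.cliqueFinset m) (v : V) :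
    insert v (G.neighborFinset v ∩ σ) ∈
      (range (m + 1)).biUnion fun k => G.cliqueFinset (k + 1) := by
  have hv : v ∉ G.neighborFinset v ∩ σ := by simp
  obtain ⟨hσcl, hcard⟩ := (G.isNClique_iff).1 (mem_cliqueFinset_iff.1 hσ)
  refine mem_biUnion.2 ⟨#(G.neighborFinset v ∩ σ), mem_range.2 ?_, ?_⟩
  · have := card_le_card (inter_subset_right : G.neighborFinset v ∩ σ ⊆ σ)
    omega
  rw [mem_cliqueFinset_iff, isNClique_iff, coe_insert, card_insert_of_notMem hv]
  refine ⟨(hσcl.subset (by simp)).insert fun u hu _ => ?_, rfl⟩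
  exact (mem_neighborFinset _ _ _).1 (mem_inter.1 hu).1

lemma sum_cliqueFinset_sum_compl_eq {M : Type*} [AddCommMonoid M] (f : Finset V → M) (m : ℕ) :
    ∑ σ ∈ G.cliqueFinset m, ∑ v ∈ σᶜ, f (insert v (G.neighborFinset v ∩ σ)) =
      ∑ k ∈ range (m + 1), ∑ τ ∈ G.cliqueFinset (k + 1),
        (∑ v ∈ τ, #{σ ∈ G.cliqueFinset m | σ ∩ G.closedNeighborFinset v = τ.erase v}) • f τ := by
  have hdisj : Set.PairwiseDisjoint ↑(range (m + 1)) fun k => G.cliqueFinset (k + 1) := by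
    intro k _ k' _ hkk'
    refine Finset.disjoint_left.2 fun τ h h' => hkk' ?_
    rw [mem_cliqueFinset_iff, isNClique_iff] at h h'
    omega
  rw [← sum_biUnion hdisj]
  calc _ = ∑ v, ∑ σ ∈ G.cliqueFinset m with v ∉ σ, f (insert v (G.neighborFinset v ∩ σ)) :=
        sum_comm' fun σ v => by simp
    _ = ∑ v, ∑ τ ∈ (range (m + 1)).biUnion fun k => G.cliqueFinset (k + 1),
          #{σ ∈ G.cliqueFinset m | v ∉ σ ∧ insert v (G.neighborFinset v ∩ σ) = τ} • f τ := by
        refine sum_congr rfl fun v _ => ?_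
        rw [← sum_fiberwise_of_maps_to fun σ hσ =>
          insert_neighborFinset_inter_mem_cliqueFinset (mem_filter.1 hσ).1 v]
        refine sum_congr rfl fun τ _ => ?_
        rw [sum_congr rfl fun σ hσ => by rw [(mem_filter.1 hσ).2], sum_const, filter_filter]
    _ = _ := by
        rw [sum_comm]
        refine sum_congr rfl fun τ _ => ?_
        rw [← sum_smul, ← sum_subset (subset_univ τ) fun v _ hv => card_eq_zero.2 <|
          filter_eq_empty_iff.2 fun σ _ h => hv (insert_neighborFinset_inter_eq_iff.1 h).1]
        refine congrArg (· • f τ) (sum_congr rfl fun v hv => congrArg card (filter_congr ?_))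
        exact fun σ _ => insert_neighborFinset_inter_eq_iff.trans (and_iff_right hv)

variable {ℓ : ℕ → ℤ}

lemma HasLinkSizes.factorial_mul_card_cliquesAbove (hℓ : HasLinkSizes G ℓ) {π : Finset V}
    (hπ : G.IsClique (π : Set V)) {n : ℕ} (hn : #π ≤ n) :
    ((n - #π)! : ℤ) * #(G.cliquesAbove π n) = ∏ j ∈ Ico #π n, ℓ j := by
  induction n, hn using Nat.le_induction with
  | base => simp [G.cliquesAbove_card_self hπ]
  | succ n hn ih =>
    have hstep : ((n + 1 - #π : ℕ) : ℤ) * #(G.cliquesAbove π (n + 1)) =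
        ℓ n * #(G.cliquesAbove π n) := by
      rw [← Nat.cast_mul, G.sub_card_mul_card_cliquesAbove_succ, Nat.cast_sum,
        sum_congr rfl fun σ hσ => (hℓ σ (mem_cliquesAbove.1 hσ).1).trans
          (congrArg ℓ (mem_cliquesAbove.1 hσ).2.1), sum_const, nsmul_eq_mul, mul_comm]
    rw [prod_Ico_succ_top hn, ← ih, Nat.sub_add_comm hn, Nat.factorial_succ, Nat.cast_mul,
      ← Nat.sub_add_comm hn]
    linear_combination ((n - #π)! : ℤ) * hstep

lemma HasLinkSizes.factorial_mul_card_filter_cliquesAbove_subset (hℓ : HasLinkSizes G ℓ)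
    {π : Finset V} {u : V} (hu : u ∈ lk G π) (i : ℕ) :
    (i ! : ℤ) * #{ρ ∈ G.cliquesAbove π (#π + i) | ρ ⊆ G.closedNeighborFinset u} =
      i * ∏ j ∈ Ico (#π + 1) (#π + i), ℓ j + ∏ j ∈ Ico (#π + 1) (#π + i + 1), ℓ j := by
  obtain ⟨huπ, huπcl⟩ := mem_lk.1 hu
  have hcl : G.IsClique ((insert u π : Finset V) : Set V) := by rwa [coe_insert]
  have hcard : #(insert u π) = #π + 1 := card_insert_of_notMem huπ
  have above (j : ℕ) : (j ! : ℤ) * #(G.cliquesAbove (insert u π) (#π + j + 1)) =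
      ∏ j ∈ Ico (#π + 1) (#π + j + 1), ℓ j := by
    have h := hℓ.factorial_mul_card_cliquesAbove hcl (n := #π + j + 1) (by omega)
    rwa [hcard, show #π + j + 1 - (#π + 1) = j by omega] at h
  rw [card_filter_cliquesAbove_subset_closedNeighborFinset huπ, Nat.cast_add, mul_add]
  congr 1
  · rcases i with _ | i
    · simp [cliquesAbove_eq_empty (show #π < #(insert u π) by omega)]
    rw [Nat.factorial_succ, Nat.cast_mul, mul_assoc, Nat.cast_succ]
    exact congrArg _ (above i)
  · exact above i

lemma HasLinkSizes.factorial_mul_card_filter_inter_closedNeighborFinset (hℓ : HasLinkSizes G ℓ)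
    {π : Finset V} {u : V} (hu : u ∈ lk G π) (p : ℕ) :
    (p ! : ℤ) * #{σ ∈ G.cliqueFinset (#π + p) | σ ∩ G.closedNeighborFinset u = π} =
      Nmk ℓ (#π + p) #π := by
  rw [card_filter_inter_closedNeighborFinset_eq_sum, mul_sum,
    ← sum_neg_one_pow_mul_choose_eq_Nmk, ← sum_fiberwise_of_maps_to (g := fun ρ => #(ρ \ π))
      (t := range (p + 1))]
  · refine sum_congr rfl fun i hi => ?_
    have hip : i ≤ p := Nat.lt_succ_iff.1 (mem_range.1 hi)
    have hterm (ρ) (hρ : ρ ∈ {ρ ∈ G.cliquesAbove π (#π + i) | ρ ⊆ G.closedNeighborFinset u}) :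
        (p ! : ℤ) * ((-1) ^ #(ρ \ π) * #(G.cliquesAbove ρ (#π + p))) =
          (-1) ^ i * p.choose i * i ! * ∏ j ∈ Ico (#π + i) (#π + p), ℓ j := by
      obtain ⟨⟨hρ, hcard, hπρ⟩, -⟩ := by simpa only [mem_filter, mem_cliquesAbove] using hρ
      have h := hℓ.factorial_mul_card_cliquesAbove hρ (n := #π + p) (by omega)
      rw [hcard, show #π + p - (#π + i) = p - i by omega] at h
      rw [card_sdiff_of_subset hπρ, hcard, Nat.add_sub_cancel_left, ← h,
        ← Nat.choose_mul_factorial_mul_factorial hip]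
      push_cast
      ring
    rw [filter_card_sdiff_eq_filter_cliquesAbove hip, sum_congr rfl hterm, sum_const, nsmul_eq_mul,
      ← hℓ.factorial_mul_card_filter_cliquesAbove_subset hu i]
    ring
  · intro ρ hρ
    simp only [mem_filter, mem_Icc] at hρ
    rw [mem_range, card_sdiff_of_subset hρ.1.1]
    omega

lemma HasLinkSizes.gfun_zero_right (hℓ : HasLinkSizes G ℓ) (m : ℕ) :
    gfun G m 0 = ∏ j ∈ range m, ℓ j := by
  have hcliques : G.cliquesAbove ∅ m = G.cliqueFinset m :=
    filter_true_of_mem fun _ _ => empty_subset _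
  have h := hℓ.factorial_mul_card_cliquesAbove (π := ∅) (by simp) (n := m) (by simp)
  rw [hcliques, card_empty, Nat.sub_zero, ← range_eq_Ico] at h
  rw [gfun_eq_factorial_mul_sum, ← h, card_eq_sum_ones, Nat.cast_sum]
  congr 1
  refine sum_congr rfl fun σ hσ => ?_
  rw [aCount_zero G ((G.isNClique_iff).1 (mem_cliqueFinset_iff.1 hσ)).1, Nat.cast_one]

lemma HasLinkSizes.gfun_succ_right (hℓ : HasLinkSizes G ℓ) (m n : ℕ) :
    gfun G m (n + 1) =
      ∑ k ∈ range (m + 1), (m.choose k : ℤ) * Nmk ℓ m k * gfun G (k + 1) n := by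
  simp_rw [gfun_eq_factorial_mul_sum, aCount_succ, Nat.cast_sum]
  rw [sum_cliqueFinset_sum_compl_eq fun τ => (aCount G τ n : ℤ), mul_sum]
  refine sum_congr rfl fun k hk => ?_
  have hkm : k ≤ m := Nat.lt_succ_iff.1 (mem_range.1 hk)
  rw [mul_sum, mul_sum, mul_sum]
  refine sum_congr rfl fun τ hτ => ?_
  obtain ⟨hτcl, hτcard⟩ := (G.isNClique_iff).1 (mem_cliqueFinset_iff.1 hτ)
  have hcount (v : V) (hv : v ∈ τ) :
      (m ! : ℤ) * #{σ ∈ G.cliqueFinset m | σ ∩ G.closedNeighborFinset v = τ.erase v} =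
        m.choose k * k ! * Nmk ℓ m k := by
    have hvlk : v ∈ lk G (τ.erase v) := by
      rw [mem_lk, ← coe_insert, insert_erase hv]
      exact ⟨notMem_erase v τ, hτcl⟩
    have herase : #(τ.erase v) = k := by rw [card_erase_of_mem hv, hτcard]; rfl
    have h := hℓ.factorial_mul_card_filter_inter_closedNeighborFinset hvlk (m - k)
    rw [herase, Nat.add_sub_cancel' hkm] at h
    rw [← Nat.choose_mul_factorial_mul_factorial hkm, Nat.cast_mul, Nat.cast_mul, mul_assoc,
      h]
  rw [nsmul_eq_mul, Nat.cast_sum, ← mul_assoc, mul_sum, sum_congr rfl hcount, sum_const,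
    nsmul_eq_mul, hτcard, Nat.factorial_succ]
  push_cast
  ring

end Cliques

lemma hasLinkSizes_of_clique_card_le [Fintype V] {G : SimpleGraph V} {d : ℕ}
    (hmax : ∀ σ : Finset V, G.IsClique (σ : Set V) → σ.card ≤ d)
    {ℓ : ℕ → ℤ} (hℓ0 : ℓ 0 = Fintype.card V)
    (hℓ : ∀ k, 1 ≤ k → k ≤ d → ∀ σ : Finset V, G.IsClique (σ : Set V) → σ.card = k →
      ℓ k = ((lk G σ).card : ℤ)) :
    HasLinkSizes G ℓ := by
  intro σ hσ
  rcases σ.eq_empty_or_nonempty with rfl | hne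
  · simp [lk_empty, hℓ0]
  · exact (hℓ _ hne.card_pos (hmax σ hσ) σ hσ rfl).symm

theorem stmt14_general [Fintype V] [DecidableEq V] (G : SimpleGraph V) [DecidableRel G.Adj]
    (d : ℕ)
    (hmax : ∀ σ : Finset V, G.IsClique (σ : Set V) → σ.card ≤ d)
    (ℓ : ℕ → ℤ) (hℓ0 : ℓ 0 = Fintype.card V)
    (hℓ : ∀ k, 1 ≤ k → k ≤ d → ∀ σ : Finset V, G.IsClique (σ : Set V) → σ.card = k →
      ℓ k = ((lk G σ).card : ℤ)) :
    (gfun G 0 0 = 1) ∧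
    (∀ n, gfun G 0 (n + 1) = gfun G 1 n) ∧
    (∀ m, 1 ≤ m → m ≤ d →
      (gfun G m 0 = ∏ j ∈ Finset.range m, ℓ j) ∧
      (∀ n, gfun G m (n + 1) =
        ∑ k ∈ Finset.range (m + 1), (m.choose k : ℤ) * Nmk ℓ m k * gfun G (k + 1) n)) := by
  have hL : HasLinkSizes G ℓ := hasLinkSizes_of_clique_card_le hmax hℓ0 hℓ
  refine ⟨?_, fun n => ?_, fun m _ _ => ⟨hL.gfun_zero_right m, hL.gfun_succ_right m⟩⟩
  · simpa using hL.gfun_zero_right 0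
  · simpa [Nmk] using hL.gfun_succ_right 0 n

theorem stmt14 [Fintype V] [DecidableEq V] (G : SimpleGraph V) [DecidableRel G.Adj]
    (d : ℕ) (hLR : LinkRegularS G)
    (hmax : ∀ σ : Finset V, G.IsClique (σ : Set V) → σ.card ≤ d)
    (hmax' : ∃ σ : Finset V, G.IsClique (σ : Set V) ∧ σ.card = d)
    (ℓ : ℕ → ℤ) (hℓ0 : ℓ 0 = Fintype.card V)
    (hℓ : ∀ k, 1 ≤ k → k ≤ d → ∀ σ : Finset V, G.IsClique (σ : Set V) → σ.card = k →
      ℓ k = ((lk G σ).card : ℤ)) :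
    (gfun G 0 0 = 1) ∧
    (∀ n, gfun G 0 (n + 1) = gfun G 1 n) ∧
    (∀ m, 1 ≤ m → m ≤ d →
      (gfun G m 0 = ∏ j ∈ Finset.range m, ℓ j) ∧
      (∀ n, gfun G m (n + 1) =
        ∑ k ∈ Finset.range (m + 1), (m.choose k : ℤ) * Nmk ℓ m k * gfun G (k + 1) n)) :=
  stmt14_general G d hmax ℓ hℓ0 hℓ
end

section
/- Let d ≥ 1, let R = ℤ[x₁, …, x_d, z] be a polynomial ring (and set x₀ = 1 ∈ R), and let b_{m,k} ∈ ℤ be given for 1 ≤ m ≤ d and 0 ≤ k ≤ m. Define r₁ = 1 and, recursively for 1 ≤ m ≤ d, r_{m+1} = r_m + x_m z^m − Σ_{k=0}^{m−1} b_{m,k} z^{m−k} r_{k+1}. Then for every 1 ≤ m ≤ d + 1, r_m = Σ_{i=0}^{m−1} Σ_{j=0}^{i} c^{(m)}_{i,j} x_j z^i, where c^{(m)}_{i,j} is the sum over all n ≥ 0 and all integer chains j ≤ s₁ < t₁ ≤ s₂ < t₂ ≤ ⋯ ≤ s_n < t_n ≤ m − 1 with (t₁ − s₁) + ⋯ + (t_n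 − s_n) = i − j of (−1)ⁿ b_{t₁,s₁} b_{t₂,s₂} ⋯ b_{t_n,s_n} (the empty chain n = 0 occurs exactly when i = j and contributes 1, so c^{(m)}_{i,i} = 1). -/
/-- The ambient polynomial ring `ℤ[x₁, x₂, …, z]`: the variable `Sum.inl j` is `x_j`
and `Sum.inr ()` is `z` (only `x₁, …, x_d` and `z` actually occur). -/
abbrev PolyRing := MvPolynomial (ℕ ⊕ Unit) ℤ

/-- `x_j`, with the convention `x₀ = 1`. -/
noncomputable def xvar (j : ℕ) : PolyRing :=
  if j = 0 then 1 else MvPolynomial.X (Sum.inl j)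

/-- The variable `z`. -/
noncomputable def zvar : PolyRing := MvPolynomial.X (Sum.inr ())

/-- A chain `j ≤ s₁ < t₁ ≤ s₂ < t₂ ≤ ⋯ ≤ s_n < t_n ≤ top` with
`(t₁ − s₁) + ⋯ + (t_n − s_n) = i − j`, encoded as the list of pairs `(s, t)`. -/
def IsBChain (j top i : ℕ) (L : List (ℕ × ℕ)) : Prop :=
  (∀ p ∈ L, p.1 < p.2) ∧ List.Chain' (fun p q => p.2 ≤ q.1) L ∧
  (∀ p ∈ L, j ≤ p.1 ∧ p.2 ≤ top) ∧
  (L.map fun p => p.2 - p.1).sum + j = i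

/-- The coefficient `c^{(m)}_{i,j}`: the sum over all chains in `[j, m − 1]` of total
increment `i − j` of `(−1)ⁿ b_{t₁,s₁} ⋯ b_{t_n,s_n}`. -/
noncomputable def ccoef (b : ℕ → ℕ → ℤ) (m i j : ℕ) : ℤ :=
  ∑ᶠ (L : List (ℕ × ℕ)) (_ : IsBChain j (m - 1) i L),
    (-1) ^ L.length * (L.map fun p => b p.2 p.1).prod

/-!
Expanding each `c^{(m)}_{i,j}` as a sum over chains, `r_m` becomes the sum of
`(−1)ⁿ b_{t₁,s₁} ⋯ b_{t_n,s_n} x_j z^{j + Σ (t − s)}` over all chains in `[j, m − 1]`.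
A chain in `[j, m]` either lies in `[j, m − 1]` or ends with a pair `(k, m)`, and removing that
pair leaves a chain in `[j, k]` while multiplying the term by `−b_{m,k} z^{m−k}`: this splitting
is exactly the recursion defining `r_{m+1}`.
-/

open Finset

def IsChainIn (j top : ℕ) (L : List (ℕ × ℕ)) : Prop :=
  (∀ p ∈ L, p.1 < p.2) ∧ L.IsChain (fun p q => p.2 ≤ q.1) ∧ ∀ p ∈ L, j ≤ p.1 ∧ p.2 ≤ top

def chainIncrement (L : List (ℕ × ℕ)) : ℕ := (L.map fun p => p.2 - p.1).sum

def chainWeight (b : ℕ → ℕ → ℤ) (L : List (ℕ × ℕ)) : ℤ :=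
  (-1) ^ L.length * (L.map fun p => b p.2 p.1).prod

lemma isBChain_iff {j top i : ℕ} {L : List (ℕ × ℕ)} :
    IsBChain j top i L ↔ IsChainIn j top L ∧ chainIncrement L + j = i :=
  ⟨fun ⟨h₁, h₂, h₃, h₄⟩ => ⟨⟨h₁, h₂, h₃⟩, h₄⟩, fun ⟨⟨h₁, h₂, h₃⟩, h₄⟩ => ⟨h₁, h₂, h₃, h₄⟩⟩

@[simp]
lemma chainIncrement_append_singleton (L : List (ℕ × ℕ)) (a : ℕ × ℕ) :
    chainIncrement (L ++ [a]) = chainIncrement L + (a.2 - a.1) := by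
  simp [chainIncrement]

@[simp]
lemma chainWeight_append_singleton (b : ℕ → ℕ → ℤ) (L : List (ℕ × ℕ)) (a : ℕ × ℕ) :
    chainWeight b (L ++ [a]) = -(b a.2 a.1 * chainWeight b L) := by
  simp only [chainWeight, List.length_append, List.length_singleton, pow_succ, List.map_append,
    List.map_singleton, List.prod_append, List.prod_singleton]
  ring

/-- The relation `p.2 ≤ q.1` is not transitive, but it is on intervals `p.1 < p.2`. -/
lemma pairwise_of_isChain {L : List (ℕ × ℕ)} (hlt : ∀ p ∈ L, p.1 < p.2)
    (h : L.IsChain fun p q => p.2 ≤ q.1) : L.Pairwise fun p q => p.2 ≤ q.1 := by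
  let R : ℕ × ℕ → ℕ × ℕ → Prop := fun p q => p.2 ≤ q.1 ∧ q.1 < q.2
  have : IsTrans (ℕ × ℕ) R := ⟨fun p q r hpq hqr => ⟨by omega, hqr.2⟩⟩
  have hR : L.IsChain R :=
    (List.IsChain.iff_mem.mp h).imp fun p q ⟨_, hq, hpq⟩ => ⟨hpq, hlt q hq⟩
  exact hR.pairwise.imp And.left

@[simp]
lemma isChainIn_nil (j top : ℕ) : IsChainIn j top [] := by
  simp [IsChainIn]

lemma isChainIn_append_singleton {j top : ℕ} {L : List (ℕ × ℕ)} {a : ℕ × ℕ} :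
    IsChainIn j top (L ++ [a]) ↔ IsChainIn j a.1 L ∧ j ≤ a.1 ∧ a.1 < a.2 ∧ a.2 ≤ top := by
  constructor
  · rintro ⟨hlt, hchain, hbd⟩
    have hle : ∀ p ∈ L, p.2 ≤ a.1 := fun p hp =>
      (List.pairwise_append.mp (pairwise_of_isChain hlt hchain)).2.2 p hp a (by simp)
    refine ⟨⟨fun p hp => hlt p (by simp [hp]), List.IsChain.left_of_append hchain,
      fun p hp => ⟨(hbd p (by simp [hp])).1, hle p hp⟩⟩, (hbd a (by simp)).1, hlt a (by simp),
      (hbd a (by simp)).2⟩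
  · rintro ⟨⟨hlt, hchain, hbd⟩, hja, ha, hat⟩
    refine ⟨?_, hchain.append (List.isChain_singleton a) ?_, ?_⟩
    · intro p hp
      rcases List.mem_append.mp hp with hp | hp
      · exact hlt p hp
      · exact (List.mem_singleton.mp hp) ▸ ha
    · intro p hp q hq
      simp only [List.head?_cons, Option.mem_def, Option.some.injEq] at hq
      exact hq ▸ (hbd p (List.mem_of_mem_getLast? hp)).2
    · intro p hp
      rcases List.mem_append.mp hp with hp | hp
      · exact ⟨(hbd p hp).1, by have := (hbd p hp).2; omega⟩
      · exact (List.mem_singleton.mp hp) ▸ ⟨hja, hat⟩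

lemma isChainIn_iff_eq_nil_of_le {j top : ℕ} {L : List (ℕ × ℕ)} (h : top ≤ j) :
    IsChainIn j top L ↔ L = [] := by
  refine ⟨fun ⟨hlt, _, hbd⟩ => List.eq_nil_iff_forall_not_mem.mpr fun p hp => ?_,
    fun hL => hL ▸ isChainIn_nil j top⟩
  have := hlt p hp
  have := hbd p hp
  omega

lemma isChainIn_succ_iff {j n : ℕ} {L : List (ℕ × ℕ)} :
    IsChainIn j (n + 1) L ↔
      IsChainIn j n L ∨
        ∃ k, j ≤ k ∧ k < n + 1 ∧ ∃ L', IsChainIn j k L' ∧ L' ++ [(k, n + 1)] = L := by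
  rcases L.eq_nil_or_concat' with rfl | ⟨L, a, rfl⟩
  · simp
  rw [isChainIn_append_singleton, isChainIn_append_singleton]
  constructor
  · rintro ⟨hL, hja, ha, hat⟩
    rcases hat.lt_or_eq with hat | hat
    · exact Or.inl ⟨hL, hja, ha, by omega⟩
    · exact Or.inr ⟨a.1, hja, by omega, L, hL, by rw [← hat]⟩
  · rintro (⟨hL, hja, ha, hat⟩ | ⟨k, hjk, hkn, L', hL', heq⟩)
    · exact ⟨hL, hja, ha, by omega⟩
    · obtain ⟨rfl, rfl⟩ : L' = L ∧ (k, n + 1) = a := by simpa using heq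
      exact ⟨hL', hjk, hkn, le_rfl⟩

lemma IsChainIn.chainIncrement_add_le {j top : ℕ} {L : List (ℕ × ℕ)} (h : IsChainIn j top L)
    (hj : j ≤ top) : chainIncrement L + j ≤ top := by
  induction L using List.reverseRecOn generalizing top with
  | nil => simpa [chainIncrement]
  | append_singleton L a ih =>
    obtain ⟨hL, hja, ha, hat⟩ := isChainIn_append_singleton.mp h
    have := ih hL hja
    simp only [chainIncrement_append_singleton]
    omega

lemma finite_setOf_isChainIn (j top : ℕ) : {L | IsChainIn j top L}.Finite := by
  induction top using Nat.strong_induction_on with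
  | _ top ih =>
  rcases top with _ | n
  · simp [isChainIn_iff_eq_nil_of_le (Nat.zero_le j)]
  have hdecomp : {L | IsChainIn j (n + 1) L} = {L | IsChainIn j n L} ∪
      ⋃ k ∈ Set.Ico j (n + 1), (· ++ [(k, n + 1)]) '' {L | IsChainIn j k L} := by
    ext L
    simp [isChainIn_succ_iff, and_assoc]
  rw [hdecomp]
  exact (ih n n.lt_succ_self).union <|
    (Set.finite_Ico j (n + 1)).biUnion fun k hk => (ih k hk.2).image _

noncomputable def chainsIn (j top : ℕ) : Finset (List (ℕ × ℕ)) :=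
  (finite_setOf_isChainIn j top).toFinset

@[simp]
lemma mem_chainsIn {j top : ℕ} {L : List (ℕ × ℕ)} : L ∈ chainsIn j top ↔ IsChainIn j top L :=
  Set.Finite.mem_toFinset _

lemma chainsIn_of_le {j top : ℕ} (h : top ≤ j) : chainsIn j top = {[]} := by
  ext L
  simp [isChainIn_iff_eq_nil_of_le h]

lemma sum_chainsIn_succ {M : Type*} [AddCommMonoid M] (f : List (ℕ × ℕ) → M) (j n : ℕ) :
    ∑ L ∈ chainsIn j (n + 1), f L = ∑ L ∈ chainsIn j n, f L +
      ∑ k ∈ Ico j (n + 1), ∑ L ∈ chainsIn j k, f (L ++ [(k, n + 1)]) := by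
  have hdecomp : chainsIn j (n + 1) = chainsIn j n ∪
      (Ico j (n + 1)).biUnion fun k => (chainsIn j k).image (· ++ [(k, n + 1)]) := by
    ext L
    simp [isChainIn_succ_iff, and_assoc]
  have hdisj : Disjoint (chainsIn j n)
      ((Ico j (n + 1)).biUnion fun k => (chainsIn j k).image (· ++ [(k, n + 1)])) := by
    simp only [Finset.disjoint_left, mem_biUnion, mem_image, mem_chainsIn, not_exists, not_and]
    rintro _ ⟨-, -, hbd⟩ k - L - rfl
    have := (hbd (k, n + 1) (by simp)).2
    omega
  have hpair : (Ico j (n + 1) : Set ℕ).PairwiseDisjoint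
      fun k => (chainsIn j k).image (· ++ [(k, n + 1)]) := by
    intro k _ k' _ hkk'
    simp only [Function.onFun, Finset.disjoint_left, mem_image, forall_exists_index, and_imp,
      not_exists, not_and]
    rintro _ L - rfl L' - heq
    exact hkk' (by simpa using heq.symm : L = L' ∧ k = k').2
  rw [hdecomp, sum_union hdisj, sum_biUnion hpair]
  congr 1
  exact sum_congr rfl fun k _ => sum_image fun L _ L' _ h => by simpa using h

lemma ccoef_eq_sum_chainsIn (b : ℕ → ℕ → ℤ) (m i j : ℕ) :
    ccoef b m i j =
      ∑ L ∈ (chainsIn j (m - 1)).filter (chainIncrement · + j = i), chainWeight b L := by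
  rw [← finsum_mem_coe_finset]
  refine finsum_congr fun L => ?_
  simp only [coe_filter, mem_chainsIn, ← isBChain_iff]
  rfl

section ChainPoly

variable {R : Type*} [CommRing R] (x : ℕ → R) (z : R) (b : ℕ → ℕ → ℤ)

def chainTerm (j : ℕ) (L : List (ℕ × ℕ)) : R :=
  (chainWeight b L : R) * x j * z ^ (chainIncrement L + j)

/-- `chainPoly x z b n` plays the role of `r_{n+1}`. -/
noncomputable def chainPoly (n : ℕ) : R :=
  ∑ j ∈ range (n + 1), ∑ L ∈ chainsIn j n, chainTerm x z b j L

lemma chainTerm_append_singleton (j k m : ℕ) (L : List (ℕ × ℕ)) :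
    chainTerm x z b j (L ++ [(k, m)]) = -((b m k : R) * z ^ (m - k) * chainTerm x z b j L) := by
  simp only [chainTerm, chainWeight_append_singleton, chainIncrement_append_singleton]
  push_cast
  ring

lemma chainPoly_zero : chainPoly x z b 0 = x 0 := by
  simp [chainPoly, chainsIn_of_le, chainTerm, chainWeight, chainIncrement]

lemma chainPoly_succ (n : ℕ) :
    chainPoly x z b (n + 1) = chainPoly x z b n + x (n + 1) * z ^ (n + 1) -
      ∑ k ∈ range (n + 1), (b (n + 1) k : R) * z ^ (n + 1 - k) * chainPoly x z b k := by
  have hswap : ∀ g : ℕ → ℕ → R, ∑ j ∈ range (n + 1), ∑ k ∈ Ico j (n + 1), g j k =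
      ∑ k ∈ range (n + 1), ∑ j ∈ range (k + 1), g j k :=
    fun g => sum_comm' fun j k => by simp only [mem_range, mem_Ico]; omega
  calc chainPoly x z b (n + 1)
      = ∑ j ∈ range (n + 1), ∑ L ∈ chainsIn j (n + 1), chainTerm x z b j L +
          x (n + 1) * z ^ (n + 1) := by
        simp [chainPoly, sum_range_succ _ (n + 1), chainsIn_of_le, chainTerm, chainWeight,
          chainIncrement]
    _ = chainPoly x z b n + ∑ j ∈ range (n + 1), ∑ k ∈ Ico j (n + 1),
          ∑ L ∈ chainsIn j k, chainTerm x z b j (L ++ [(k, n + 1)]) + x (n + 1) * z ^ (n + 1) := by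
        simp only [sum_chainsIn_succ, sum_add_distrib, chainPoly]
    _ = _ := by
        simp only [hswap, chainTerm_append_singleton, sum_neg_distrib, chainPoly, mul_sum]
        ring

lemma sum_ccoef_eq_chainPoly (n : ℕ) :
    ∑ i ∈ range (n + 1), ∑ j ∈ range (i + 1), (ccoef b (n + 1) i j : R) * x j * z ^ i =
      chainPoly x z b n := by
  have hswap : ∀ g : ℕ → ℕ → R, ∑ i ∈ range (n + 1), ∑ j ∈ range (i + 1), g i j =
      ∑ j ∈ range (n + 1), ∑ i ∈ Ico j (n + 1), g i j :=
    fun g => sum_comm' fun i j => by simp only [mem_range, mem_Ico]; omega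
  rw [hswap]
  refine sum_congr rfl fun j hj => ?_
  have hmaps : ∀ L ∈ chainsIn j n, chainIncrement L + j ∈ Ico j (n + 1) := fun L hL => by
    have := (mem_chainsIn.mp hL).chainIncrement_add_le (by simpa [Nat.lt_succ_iff] using hj)
    simp only [mem_Ico]
    omega
  rw [← sum_fiberwise_of_maps_to hmaps]
  refine sum_congr rfl fun i _ => ?_
  rw [ccoef_eq_sum_chainsIn, Nat.add_sub_cancel, Int.cast_sum, sum_mul, sum_mul]
  refine sum_congr rfl fun L hL => ?_
  rw [chainTerm, (mem_filter.mp hL).2]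

end ChainPoly

theorem stmt16_general (d : ℕ) (b : ℕ → ℕ → ℤ)
    (r : ℕ → PolyRing) (hr1 : r 1 = 1)
    (hrec : ∀ m, 1 ≤ m → m ≤ d →
      r (m + 1) = r m + xvar m * zvar ^ m
        - ∑ k ∈ Finset.range m, MvPolynomial.C (b m k) * zvar ^ (m - k) * r (k + 1)) :
    ∀ m, 1 ≤ m → m ≤ d + 1 →
      r m = ∑ i ∈ Finset.range m, ∑ j ∈ Finset.range (i + 1),
        MvPolynomial.C (ccoef b m i j) * xvar j * zvar ^ i := by
  have hchain : ∀ n ≤ d, r (n + 1) = chainPoly xvar zvar b n := by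
    intro n
    induction n using Nat.strong_induction_on with
    | _ n ih =>
    intro hn
    rcases n with _ | n
    · simp [hr1, chainPoly_zero, xvar]
    · rw [hrec (n + 1) n.succ_pos hn, chainPoly_succ, ih n n.lt_succ_self (by omega)]
      congr 1
      refine sum_congr rfl fun k hk => ?_
      rw [ih k (by simpa using hk) (by simp at hk; omega), eq_intCast]
  intro m hm hmd
  obtain ⟨n, rfl⟩ := Nat.exists_eq_add_of_le' hm
  rw [hchain n (by omega), ← sum_ccoef_eq_chainPoly]
  simp only [eq_intCast]

theorem stmt16 (d : ℕ) (hd : 1 ≤ d) (b : ℕ → ℕ → ℤ)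
    (r : ℕ → PolyRing) (hr1 : r 1 = 1)
    (hrec : ∀ m, 1 ≤ m → m ≤ d →
      r (m + 1) = r m + xvar m * zvar ^ m
        - ∑ k ∈ Finset.range m, MvPolynomial.C (b m k) * zvar ^ (m - k) * r (k + 1)) :
    ∀ m, 1 ≤ m → m ≤ d + 1 →
      r m = ∑ i ∈ Finset.range m, ∑ j ∈ Finset.range (i + 1),
        MvPolynomial.C (ccoef b m i j) * xvar j * zvar ^ i :=
  stmt16_general d b r hr1 hrec
end
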